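/- Let M be a free monoid on {a,b,c,d} and consider the quotient group G = ⟨a,b,c,d | a² = b² = c² = d² = 1, bc = cb = d, cd = dc = b, bd = db = c⟩. Then every element of G is represented by a word of the form [a] x₁ a x₂ a … a x_k [a] where each xᵢ ∈ {b,c,d} and [a] denotes an optional letter a; moreover such a representative can be chosen with length at most that of any given representing word. -/

import Mathlib

inductive GLetter : Type
  | a | b | c | d
deriving DecidableEq

open FreeGroup in
/-- The relations a² = b² = c² = d² = 1, bc = cb = d, cd = dc = b,
bd = db = c of the quotient group G. -/
def grigRels : Set (FreeGroup GLetter) :=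
  { of GLetter.a * of GLetter.a,
    of GLetter.b * of GLetter.b,
    of GLetter.c * of GLetter.c,
    of GLetter.d * of GLetter.d,
    of GLetter.b * of GLetter.c * (of GLetter.d)⁻¹,
    of GLetter.c * of GLetter.b * (of GLetter.d)⁻¹,
    of GLetter.c * of GLetter.d * (of GLetter.b)⁻¹,
    of GLetter.d * of GLetter.c * (of GLetter.b)⁻¹,
    of GLetter.b * of GLetter.d * (of GLetter.c)⁻¹,
    of GLetter.d * of GLetter.b * (of GLetter.c)⁻¹ }

/-- Evaluation of a word over {a,b,c,d} in the presented group. -/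
def evalWord (w : List GLetter) : PresentedGroup grigRels :=
  (w.map PresentedGroup.of).prod

/-- A word is reduced if letters alternate between `a` and letters in
`{b,c,d}`, i.e. it has the form [a] x₁ a x₂ a … a x_k [a]. -/
def GIsReduced (w : List GLetter) : Prop :=
  w.Chain' fun x y => (x = GLetter.a ↔ y ≠ GLetter.a)


/-! Since all four generators are involutions, every element of `G` is the value of a positive
word. As `{1, b, c, d}` is a Klein four-group, prepending a letter to an alternating word either
keeps it alternating, cancels against the first letter, or merges with it into a single letter of
`{b, c, d}`. Reducing a word letter by letter from the right therefore yields an alternating word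
that is no longer and represents the same element. -/

open PresentedGroup

namespace GLetter

/-- Junk value `a` unless `x` and `y` are distinct letters of `{b, c, d}`. -/
def kleinMul : GLetter → GLetter → GLetter
  | b, c => d
  | c, b => d
  | c, d => b
  | d, c => b
  | b, d => c
  | d, b => c
  | _, _ => a

lemma kleinMul_ne_a {x y : GLetter} (hx : x ≠ a) (hy : y ≠ a) (hxy : x ≠ y) :
    kleinMul x y ≠ a := by
  cases x <;> cases y <;> simp_all [kleinMul]

end GLetter

open GLetter

lemma of_mul_self (x : GLetter) :
    (of x : PresentedGroup grigRels) * of x = 1 :=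
  one_of_mem (by cases x <;> simp [grigRels])

lemma of_inv (x : GLetter) : (of x : PresentedGroup grigRels)⁻¹ = of x :=
  inv_eq_of_mul_eq_one_right (of_mul_self x)

lemma of_mul_of {x y : GLetter} (hx : x ≠ a) (hy : y ≠ a) (hxy : x ≠ y) :
    (of x : PresentedGroup grigRels) * of y = of (kleinMul x y) :=
  mk_eq_mk_of_mul_inv_mem (by cases x <;> cases y <;> simp_all [grigRels, kleinMul])

@[simp] lemma evalWord_nil : evalWord [] = 1 := rfl

@[simp] lemma evalWord_cons (x : GLetter) (w : List GLetter) :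
    evalWord (x :: w) = of x * evalWord w :=
  List.prod_cons

lemma evalWord_append (u v : List GLetter) : evalWord (u ++ v) = evalWord u * evalWord v := by
  simp [evalWord]

lemma evalWord_reverse (w : List GLetter) : evalWord w.reverse = (evalWord w)⁻¹ := by
  induction w with
  | nil => simp
  | cons x t ih => simp [evalWord_append, ih, of_inv]

lemma evalWord_surjective : Function.Surjective evalWord := fun g =>
  generated_by grigRels
    { carrier := Set.range evalWord
      one_mem' := ⟨[], rfl⟩
      mul_mem' := fun ⟨u, hu⟩ ⟨v, hv⟩ => ⟨u ++ v, by rw [evalWord_append, hu, hv]⟩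
      inv_mem' := fun ⟨w, hw⟩ => ⟨w.reverse, by rw [evalWord_reverse, hw]⟩ }
    (fun x => ⟨[x], mul_one _⟩) g

lemma ne_a_of_not_alternating {x y : GLetter} (h : ¬(x = a ↔ y ≠ a)) (hxy : x ≠ y) :
    x ≠ a ∧ y ≠ a := by
  constructor <;> rintro rfl <;> simp_all

def consReduce (x : GLetter) : List GLetter → List GLetter
  | [] => [x]
  | y :: t =>
    if (x = a ↔ y ≠ a) then x :: y :: t
    else if x = y then t
    else kleinMul x y :: t

lemma evalWord_consReduce (x : GLetter) (w : List GLetter) :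
    evalWord (consReduce x w) = of x * evalWord w := by
  cases w with
  | nil => rfl
  | cons y t =>
    simp only [consReduce]
    split_ifs with halt hxy
    · rfl
    · rw [hxy, evalWord_cons, ← mul_assoc, of_mul_self, one_mul]
    · obtain ⟨hx, hy⟩ := ne_a_of_not_alternating halt hxy
      rw [evalWord_cons, evalWord_cons, ← mul_assoc, of_mul_of hx hy hxy]

lemma length_consReduce_le (x : GLetter) (w : List GLetter) :
    (consReduce x w).length ≤ w.length + 1 := by
  cases w with
  | nil => rfl
  | cons y t =>
    simp only [consReduce]
    split_ifs <;> simp only [List.length_cons] <;> omega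

lemma isReduced_consReduce (x : GLetter) {w : List GLetter} (hw : GIsReduced w) :
    GIsReduced (consReduce x w) := by
  cases w with
  | nil => exact List.isChain_singleton x
  | cons y t =>
    have ht : GIsReduced t := hw.tail
    simp only [consReduce]
    split_ifs with halt hxy
    · exact List.isChain_cons_cons.mpr ⟨halt, hw⟩
    · exact ht
    · obtain ⟨hx, hy⟩ := ne_a_of_not_alternating halt hxy
      cases t with
      | nil => exact List.isChain_singleton _
      | cons z s =>
        have hz : z = a := by simpa [hy] using (List.isChain_cons_cons.mp hw).1
        exact List.isChain_cons_cons.mpr ⟨by simp [kleinMul_ne_a hx hy hxy, hz], ht⟩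

def reduceWord (w : List GLetter) : List GLetter := w.foldr consReduce []

lemma isReduced_reduceWord (w : List GLetter) : GIsReduced (reduceWord w) := by
  induction w with
  | nil => exact List.isChain_nil
  | cons x t ih => exact isReduced_consReduce x ih

lemma evalWord_reduceWord (w : List GLetter) : evalWord (reduceWord w) = evalWord w := by
  induction w with
  | nil => rfl
  | cons x t ih =>
    rw [reduceWord, List.foldr_cons, evalWord_consReduce, ← reduceWord, ih, evalWord_cons]

lemma length_reduceWord_le (w : List GLetter) : (reduceWord w).length ≤ w.length := by
  induction w with
  | nil => rfl
  | cons x t ih => exact (length_consReduce_le x _).trans (Nat.succ_le_succ ih)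

theorem exists_reduced_representative :
    (∀ g : PresentedGroup grigRels,
        ∃ w' : List GLetter, GIsReduced w' ∧ evalWord w' = g) ∧
    (∀ w : List GLetter,
        ∃ w' : List GLetter, GIsReduced w' ∧ evalWord w' = evalWord w ∧
          w'.length ≤ w.length) := by
  refine ⟨fun g => ?_, fun w => ?_⟩
  · obtain ⟨w, rfl⟩ := evalWord_surjective g
    exact ⟨reduceWord w, isReduced_reduceWord w, evalWord_reduceWord w⟩
  · exact ⟨reduceWord w, isReduced_reduceWord w, evalWord_reduceWord w, length_reduceWord_le w⟩
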